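/- For every nonzero real r and all positive real colour parameters s, s', s'', the coloured R-matrices R_r^{s,s'} satisfy the coloured quantum Yang–Baxter equation R₁₂(r; s, s') * R₁₃(r; s, s'') * R₂₃(r; s', s'') = R₂₃(r; s', s'') * R₁₃(r; s, s'') * R₁₂(r; s, s'). -/

import Mathlib

noncomputable section

open Matrix Real

/-- The coloured `R`-matrix `R_r^{s,s'}` of the coloured extension `G_{r,s,s'}` of
`G_{r,s}`, indexed by `Fin 3 × Fin 3` (indices `0,1,2` correspond to the paper's
`1,2,3`). -/
def Rrss (r s s' : ℝ) : Matrix (Fin 3 × Fin 3) (Fin 3 × Fin 3) ℝ :=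
  fun p q =>
    if p = (0, 0) ∧ q = (0, 0) then r
    else if p = (1, 1) ∧ q = (1, 1) then r
    else if p = (2, 2) ∧ q = (2, 2) then r
    else if p = (0, 1) ∧ q = (0, 1) then 1
    else if p = (1, 0) ∧ q = (1, 0) then 1
    else if p = (0, 1) ∧ q = (1, 0) then r - r⁻¹
    else if p = (0, 2) ∧ q = (0, 2) then Real.sqrt (s * s')
    else if p = (1, 2) ∧ q = (1, 2) then Real.sqrt (s / s')
    else if p = (2, 0) ∧ q = (2, 0) then 1 / Real.sqrt (s * s')
    else if p = (2, 1) ∧ q = (2, 1) then Real.sqrt (s / s')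
    else 0

/-- Leg embedding `R₁₂` acting on the first two tensor factors. -/
def leg12 {n : ℕ} (R : Matrix (Fin n × Fin n) (Fin n × Fin n) ℝ) :
    Matrix (Fin n × Fin n × Fin n) (Fin n × Fin n × Fin n) ℝ :=
  fun p q => if p.2.2 = q.2.2 then R (p.1, p.2.1) (q.1, q.2.1) else 0

/-- Leg embedding `R₁₃` acting on the first and third tensor factors. -/
def leg13 {n : ℕ} (R : Matrix (Fin n × Fin n) (Fin n × Fin n) ℝ) :
    Matrix (Fin n × Fin n × Fin n) (Fin n × Fin n × Fin n) ℝ :=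
  fun p q => if p.2.1 = q.2.1 then R (p.1, p.2.2) (q.1, q.2.2) else 0

/-- Leg embedding `R₂₃` acting on the last two tensor factors. -/
def leg23 {n : ℕ} (R : Matrix (Fin n × Fin n) (Fin n × Fin n) ℝ) :
    Matrix (Fin n × Fin n × Fin n) (Fin n × Fin n × Fin n) ℝ :=
  fun p q => if p.1 = q.1 then R (p.2.1, p.2.2) (q.2.1, q.2.2) else 0

/-!
`R_r^{s,s'}` is a diagonal matrix plus one off-diagonal entry `t = r - r⁻¹` at `((0,1),(1,0))`.
For three matrices of this shape, each leg acts on a vector through a row of `R` with at most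
two nonzero entries, and the difference of the two sides of the Yang–Baxter equation has only
nine entries that do not vanish identically, each `t` times a relation between `t` and the
diagonal weights. For `R_r^{s,s'}` two of them are the Hecke relation `r² = (r - r⁻¹) r + 1`,
three are multiplicativity relations between the colour weights, such as
`√(s/s'') √(s' s'') = √(s s'') √(s'/s'')`, and the other four are trivial.
-/

theorem diagonal_add_single_mulVec_apply {ι α : Type*} [Fintype ι] [DecidableEq ι]
    [NonUnitalNonAssocSemiring α] (d : ι → α) (i j : ι) (c : α) (f : ι → α) (a : ι) :
    ((diagonal d + single i j c) *ᵥ f) a = d a * f a + if a = i then c * f j else 0 := by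
  rw [add_mulVec, Pi.add_apply, mulVec_diagonal, single_mulVec, Function.update_apply]
  simp

section Legs

variable {n : ℕ} (R : Matrix (Fin n × Fin n) (Fin n × Fin n) ℝ) (f : Fin n × Fin n × Fin n → ℝ)
  (p : Fin n × Fin n × Fin n)

theorem leg12_mulVec_apply :
    (leg12 R *ᵥ f) p = (R *ᵥ fun m => f (m.1, m.2, p.2.2)) (p.1, p.2.1) := by
  simp [mulVec, dotProduct, leg12, Fintype.sum_prod_type]

theorem leg13_mulVec_apply :
    (leg13 R *ᵥ f) p = (R *ᵥ fun m => f (m.1, p.2.1, m.2)) (p.1, p.2.2) := by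
  simp [mulVec, dotProduct, leg13, Fintype.sum_prod_type]

theorem leg23_mulVec_apply :
    (leg23 R *ᵥ f) p = (R *ᵥ fun m => f (p.1, m.1, m.2)) (p.2.1, p.2.2) := by
  simp [mulVec, dotProduct, leg23, Fintype.sum_prod_type]

end Legs

theorem yangBaxter_diagonal_add_single (d₁₂ d₁₃ d₂₃ : Fin 3 × Fin 3 → ℝ) (t : ℝ)
    (h₁ : d₁₂ (0, 0) * d₁₃ (0, 1) = d₁₂ (0, 1) * d₁₃ (0, 0))
    (h₂ : d₁₂ (0, 0) * d₂₃ (0, 0) = t * d₁₃ (0, 0) + d₁₂ (1, 0) * d₂₃ (0, 1))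
    (h₃ : d₁₃ (1, 0) * d₂₃ (0, 0) = d₁₃ (0, 0) * d₂₃ (1, 0))
    (h₄ : d₁₃ (1, 1) * d₂₃ (0, 1) = d₁₃ (0, 1) * d₂₃ (1, 1))
    (h₅ : d₁₂ (0, 1) * d₂₃ (1, 0) + t * d₁₃ (1, 1) = d₁₂ (1, 1) * d₂₃ (1, 1))
    (h₆ : d₁₃ (1, 2) * d₂₃ (0, 2) = d₁₃ (0, 2) * d₂₃ (1, 2))
    (h₇ : d₁₂ (0, 2) * d₂₃ (2, 0) = d₁₂ (1, 2) * d₂₃ (2, 1))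
    (h₈ : d₁₂ (1, 0) * d₁₃ (1, 1) = d₁₂ (1, 1) * d₁₃ (1, 0))
    (h₉ : d₁₂ (2, 0) * d₁₃ (2, 1) = d₁₂ (2, 1) * d₁₃ (2, 0)) :
    leg12 (diagonal d₁₂ + single (0, 1) (1, 0) t) * leg13 (diagonal d₁₃ + single (0, 1) (1, 0) t) *
        leg23 (diagonal d₂₃ + single (0, 1) (1, 0) t) =
      leg23 (diagonal d₂₃ + single (0, 1) (1, 0) t) *
        leg13 (diagonal d₁₃ + single (0, 1) (1, 0) t) *
        leg12 (diagonal d₁₂ + single (0, 1) (1, 0) t) := by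
  refine ext_iff_mulVec.2 fun f => funext fun ⟨i, j, k⟩ => ?_
  simp only [← mulVec_mulVec, leg12_mulVec_apply, leg13_mulVec_apply, leg23_mulVec_apply,
    diagonal_add_single_mulVec_apply]
  fin_cases i <;> fin_cases j <;> fin_cases k <;>
    simp only [Fin.zero_eta, Fin.mk_one, Fin.reduceFinMk, Fin.isValue, Prod.mk.injEq, Fin.reduceEq,
      zero_ne_one, one_ne_zero, and_false, and_true, and_self, ↓reduceIte, add_zero] <;>
    grind

theorem Rrss_eq_diagonal_add_single (r s s' : ℝ) :
    Rrss r s s' = diagonal (Rrss r s s').diag + single (0, 1) (1, 0) (r - r⁻¹) := by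
  ext p q
  fin_cases p <;> fin_cases q <;> simp [Rrss]

/-- for nonzero real `r` and positive colour parameters `s, s', s''`, the
coloured `R`-matrices `R_r^{s,s'}` satisfy the coloured quantum Yang–Baxter equation. -/
theorem Rrss_CQYBE (r : ℝ) (hr : r ≠ 0) (s s' s'' : ℝ)
    (hs : 0 < s) (hs' : 0 < s') (hs'' : 0 < s'') :
    leg12 (Rrss r s s') * leg13 (Rrss r s s'') * leg23 (Rrss r s' s'') =
      leg23 (Rrss r s' s'') * leg13 (Rrss r s s'') * leg12 (Rrss r s s') := by
  rw [Rrss_eq_diagonal_add_single r s s', Rrss_eq_diagonal_add_single r s s'',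
    Rrss_eq_diagonal_add_single r s' s'']
  have hs_sqrt : 0 < √s := Real.sqrt_pos.2 hs
  have hs'_sqrt : 0 < √s' := Real.sqrt_pos.2 hs'
  have hs''_sqrt : 0 < √s'' := Real.sqrt_pos.2 hs''
  apply yangBaxter_diagonal_add_single <;>
    simp only [diag_apply, Rrss, Fin.isValue, Prod.mk.injEq, Fin.reduceEq, zero_ne_one, one_ne_zero,
      and_false, and_true, and_self, ↓reduceIte, mul_one, one_mul,
      Real.sqrt_mul hs.le, Real.sqrt_mul hs'.le, Real.sqrt_div' _ hs'.le, Real.sqrt_div' _ hs''.le] <;>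
    field_simp <;> ring
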